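/- Let S be a finite commutative semigroup with zero and let s be a vertex of Γ(S) whose degree m is maximal among the degrees of all vertices of Γ(S). Assume Γ(S) is m-uniquely determined: for any vertices x, y of Γ(S) with |N(x)| = |N(y)| = m, N(x) = N(y) implies x = y. If s·s = s, then {0, s} is an ideal of S, i.e., s·a ∈ {0, s} for every a ∈ S. -/

import Mathlib

universe u v w
/-- A commutative semigroup with a zero element `0` satisfying `0 * a = 0`. -/
class CommSemigroupWithZero (S : Type u) extends CommSemigroup S, Zero S where
  zero_mul' : ∀ a : S, 0 * a = 0

/-- The zero-divisor graph of `S`, as a simple graph on all of `S`: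
distinct nonzero `x, y` are adjacent iff `x * y = 0`.  (The element `0` and the
non-zero-divisors are isolated vertices, so adjacency, end vertices and cycles
are exactly those of `Γ(S)`.) -/
def zdGraph (S : Type u) [CommSemigroupWithZero S] : SimpleGraph S where
  Adj x y := x ≠ y ∧ x * y = 0 ∧ x ≠ 0 ∧ y ≠ 0
  symm := by
    constructor
    rintro x y ⟨h1, h2, h3, h4⟩
    exact ⟨h1.symm, by rwa [mul_comm], h4, h3⟩
  loopless := ⟨fun x h => h.1 rfl⟩

/-- `x` is a vertex of `Γ(S)`: a nonzero zero-divisor. -/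
def IsVertex (S : Type u) [CommSemigroupWithZero S] (x : S) : Prop :=
  x ≠ 0 ∧ ∃ y : S, y ≠ 0 ∧ x * y = 0

/-- `x` is an end vertex of `Γ(S)`: it has exactly one neighbour. -/
def IsEndVertex (S : Type u) [CommSemigroupWithZero S] (x : S) : Prop :=
  ∃! y : S, (zdGraph S).Adj x y

/- If `s` is idempotent and `t = s * a ≠ 0`, then `N(s) ⊆ N(t)`; maximality of `deg s` forces
`N(s) = N(t)`, and `m`-unique determination forces `t = s`. -/

section
variable {S : Type u} [CommSemigroupWithZero S]

open CommSemigroupWithZero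

theorem IsVertex.mul_of_ne_zero {s : S} (hs : IsVertex S s) {a : S} (ha : s * a ≠ 0) :
    IsVertex S (s * a) := by
  obtain ⟨-, y, hy, hsy⟩ := hs
  exact ⟨ha, y, hy, by rw [mul_right_comm, hsy, zero_mul']⟩

theorem zdGraph_neighborSet_subset_mul_of_mul_self {s : S} (hss : s * s = s) {a : S}
    (ha : s * a ≠ 0) : (zdGraph S).neighborSet s ⊆ (zdGraph S).neighborSet (s * a) := by
  rintro x ⟨-, hsx, -, hx⟩
  have hne : s * a ≠ x := by
    rintro rfl
    exact ha (by rw [← hsx, ← mul_assoc, hss])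
  exact ⟨hne, by rw [mul_right_comm, hsx, zero_mul'], ha, hx⟩

end

/-- Proposition 2.10: let `S` be a finite semigroup, `s` a vertex of `Γ(S)` of maximal
degree `m`, and suppose `Γ(S)` is `m`-uniquely determined.  If `s * s = s`, then `{0, s}`
is an ideal of `S`. -/
theorem stmt11 (S : Type u) [CommSemigroupWithZero S] [Finite S]
    (s : S) (hs : IsVertex S s) (m : ℕ)
    (hm : ((zdGraph S).neighborSet s).ncard = m)
    (hmax : ∀ y : S, IsVertex S y → ((zdGraph S).neighborSet y).ncard ≤ m)
    (hud : ∀ x y : S, IsVertex S x → IsVertex S y →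
      ((zdGraph S).neighborSet x).ncard = m → ((zdGraph S).neighborSet y).ncard = m →
      (zdGraph S).neighborSet x = (zdGraph S).neighborSet y → x = y)
    (hss : s * s = s) :
    ∀ a : S, s * a = 0 ∨ s * a = s := by
  intro a
  by_cases ha : s * a = 0
  · exact Or.inl ha
  have hvert : IsVertex S (s * a) := hs.mul_of_ne_zero ha
  have hsub := zdGraph_neighborSet_subset_mul_of_mul_self hss ha
  have hdeg : ((zdGraph S).neighborSet (s * a)).ncard = m :=
    (hmax _ hvert).antisymm (hm ▸ Set.ncard_le_ncard hsub (Set.toFinite _))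
  have hN : (zdGraph S).neighborSet s = (zdGraph S).neighborSet (s * a) :=
    Set.eq_of_subset_of_ncard_le hsub (by rw [hdeg, hm]) (Set.toFinite _)
  exact Or.inr (hud _ _ hvert hs hdeg hm hN.symm)
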